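/- arXiv:1209.1364 — 4 statements merged into one kernel-verified Lean document; each statement's English description precedes it below -/
import Mathlib

section
/- Let A be a 3×3 real matrix with trace zero such that I + (k/2)A is invertible for a real number k ≠ 0. Then det((I + (k/2)A)⁻¹(I - (k/2)A)) = 1 if and only if det(A) = 0. -/
/-! The determinant of `1 + c • A` is a cubic in `c` whose odd part is `c tr A + c³ det A`, so for
`tr A = 0` the Cayley factors `1 ± c • A` have equal determinants exactly when `c³ det A = 0`. -/

namespace Matrix

theorem det_one_add_smul_sub_det_one_sub_smul_fin_three {R : Type*} [CommRing R]
    (A : Matrix (Fin 3) (Fin 3) R) (c : R) :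
    (1 + c • A).det - (1 - c • A).det = 2 * c * A.trace + 2 * c ^ 3 * A.det := by
  simp only [det_fin_three, trace_fin_three, add_apply, sub_apply, one_apply, smul_apply,
    smul_eq_mul, Fin.isValue, Fin.reduceEq, ↓reduceIte]
  ring

theorem det_nonsing_inv_mul_eq_one_iff {K n : Type*} [Field K] [Fintype n] [DecidableEq n]
    {M N : Matrix n n K} (hM : IsUnit M) : (M⁻¹ * N).det = 1 ↔ N.det = M.det := by
  have hdet : M.det ≠ 0 := ((isUnit_iff_isUnit_det M).mp hM).ne_zero
  rw [det_mul, det_nonsing_inv, Ring.inverse_eq_inv', inv_mul_eq_one₀ hdet, eq_comm]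

end Matrix

theorem stmt_4 (A : Matrix (Fin 3) (Fin 3) ℝ) (hA : A.trace = 0)
    (k : ℝ) (hk : k ≠ 0) (hinv : IsUnit (1 + (k/2) • A)) :
    ((1 + (k/2) • A)⁻¹ * (1 - (k/2) • A)).det = 1 ↔ A.det = 0 := by
  rw [Matrix.det_nonsing_inv_mul_eq_one_iff hinv, eq_comm, ← sub_eq_zero,
    Matrix.det_one_add_smul_sub_det_one_sub_smul_fin_three, hA, mul_zero, zero_add]
  have hcoeff : 2 * (k / 2) ^ 3 ≠ 0 := by positivity
  exact mul_eq_zero_iff_left hcoeff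
end

section
/- Let V be a real vector space with convex functional φ, and let U(t) be the linear interpolant of Uⁿ⁻¹ and Uⁿ on [tₙ₋₁, tₙ] with U'(t) = (Uⁿ - Uⁿ⁻¹)/kₙ, and suppose ⟨(Uⁿ - Uⁿ⁻¹)/kₙ, v⟩ + a(Uⁿ, v) = 0 for all v. Define the residual 𝔕(t) := ⟨U'(t), U(t) - Uⁿ⟩ + φ(U(t)) - φ(Uⁿ) where φ(w) = (1/2)a(w,w). Then 𝔕(t) ≤ (tₙ - t)·ξₙ for all t ∈ [tₙ₋₁, tₙ], where ξₙ := -‖(Uⁿ - Uⁿ⁻¹)/kₙ‖² - (φ(Uⁿ) - φ(Uⁿ⁻¹))/kₙ. -/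
/-!
Write `U(t) = Uⁿ - s (Uⁿ - Uⁿ⁻¹)` with `s = (tₙ - t)/kₙ ∈ [0, 1]` and `D = Uⁿ - Uⁿ⁻¹`. Testing the
scheme with `v = D` gives `a(Uⁿ, D) = -‖D‖²/kₙ`, and with this identity both sides collapse:
the residual equals `s² a(D, D)/2` and `ξₙ = a(D, D)/(2kₙ)`, so the right-hand side is
`s a(D, D)/2`. The claim is then `s² ≤ s` times `a(D, D) ≥ 0`.
-/

open LinearMap (BilinForm)

lemma smul_add_smul_eq_sub_smul_sub {E : Type*} [AddCommGroup E] [Module ℝ E]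
    {α β : ℝ} (h : α + β = 1) (u w : E) :
    α • u + β • w = u - β • (u - w) := by
  obtain rfl : α = 1 - β := by linarith
  rw [sub_smul, one_smul, smul_sub]
  abel

lemma BilinForm.apply_sub_smul_self {E : Type*} [AddCommGroup E] [Module ℝ E]
    (a : BilinForm ℝ E) (hsym : ∀ x y : E, a x y = a y x) (u d : E) (s : ℝ) :
    a (u - s • d) (u - s • d) = a u u - 2 * s * a u d + s ^ 2 * a d d := by
  simp only [map_sub, map_smul, LinearMap.sub_apply, LinearMap.smul_apply, smul_eq_mul,
    hsym d u]
  ring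

section Residual

variable {H : Type*} [NormedAddCommGroup H] [InnerProductSpace ℝ H]
  (a : BilinForm ℝ H) (hsym : ∀ x y : H, a x y = a y x) {k : ℝ} {u w : H}
  (hscheme : inner ℝ (k⁻¹ • (u - w)) (u - w) + a u (u - w) = (0 : ℝ))

include hsym hscheme

lemma residual_eq (s : ℝ) :
    (inner ℝ (k⁻¹ • (u - w)) ((u - s • (u - w)) - u) : ℝ)
      + (1/2) * a (u - s • (u - w)) (u - s • (u - w)) - (1/2) * a u u
    = s ^ 2 / 2 * a (u - w) (u - w) := by
  rw [BilinForm.apply_sub_smul_self a hsym, sub_sub_cancel_left, inner_neg_right,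
    real_inner_smul_right]
  linear_combination (-s) * hscheme

lemma discrete_dissipation_eq :
    -‖k⁻¹ • (u - w)‖ ^ 2 - ((1/2) * a u u - (1/2) * a w w) / k
    = a (u - w) (u - w) / (2 * k) := by
  have hw : a w w = a u u - 2 * a u (u - w) + a (u - w) (u - w) := by
    simpa using BilinForm.apply_sub_smul_self a hsym u (u - w) 1
  rw [← real_inner_self_eq_norm_sq, real_inner_smul_left, real_inner_smul_right, hw]
  rw [real_inner_smul_left] at hscheme
  linear_combination (-k⁻¹) * hscheme

end Residual

theorem stmt_11_general {H : Type*} [NormedAddCommGroup H] [InnerProductSpace ℝ H]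
    (a : LinearMap.BilinForm ℝ H)
    (hsym : ∀ x y : H, a x y = a y x)
    (hpsd : ∀ v : H, 0 ≤ a v v)
    (t0 t1 : ℝ) (ht : t0 < t1) (U0 U1 : H)
    (hscheme : ∀ v : H,
      inner ℝ ((t1 - t0)⁻¹ • (U1 - U0)) v + a U1 v = (0:ℝ))
    (t : ℝ) (htmem : t ∈ Set.Icc t0 t1) :
    (inner ℝ ((t1 - t0)⁻¹ • (U1 - U0))
        ((((t - t0)/(t1 - t0)) • U1 + ((t1 - t)/(t1 - t0)) • U0) - U1) : ℝ)
      + (1/2) * a (((t - t0)/(t1 - t0)) • U1 + ((t1 - t)/(t1 - t0)) • U0)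
                  (((t - t0)/(t1 - t0)) • U1 + ((t1 - t)/(t1 - t0)) • U0)
      - (1/2) * a U1 U1
    ≤ (t1 - t) *
        (-‖(t1 - t0)⁻¹ • (U1 - U0)‖^2
          - ((1/2) * a U1 U1 - (1/2) * a U0 U0) / (t1 - t0)) := by
  have hk : 0 < t1 - t0 := sub_pos.2 ht
  set s := (t1 - t) / (t1 - t0) with hs
  have hs0 : 0 ≤ s := div_nonneg (by linarith [htmem.2]) hk.le
  have hs1 : s ≤ 1 := (div_le_one hk).2 (by linarith [htmem.1])
  have hinterp : ((t - t0) / (t1 - t0)) + s = 1 := by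
    rw [hs, ← add_div]; exact (div_eq_one_iff_eq hk.ne').2 (by ring)
  rw [smul_add_smul_eq_sub_smul_sub hinterp, residual_eq a hsym (hscheme _),
    discrete_dissipation_eq a hsym (hscheme _)]
  calc s ^ 2 / 2 * a (U1 - U0) (U1 - U0) ≤ s / 2 * a (U1 - U0) (U1 - U0) := by
        gcongr ?_ / 2 * _
        · exact hpsd _
        · exact sq_le hs0 hs1
    _ = (t1 - t) * (a (U1 - U0) (U1 - U0) / (2 * (t1 - t0))) := by
        rw [hs]; field_simp

theorem stmt_11 {H : Type*} [NormedAddCommGroup H] [InnerProductSpace ℝ H]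
    [CompleteSpace H]
    (a : LinearMap.BilinForm ℝ H)
    (hcont : Continuous fun p : H × H => a p.1 p.2)
    (hsym : ∀ x y : H, a x y = a y x)
    (hpsd : ∀ v : H, 0 ≤ a v v)
    (t0 t1 : ℝ) (ht : t0 < t1) (U0 U1 : H)
    (hscheme : ∀ v : H,
      inner ℝ ((t1 - t0)⁻¹ • (U1 - U0)) v + a U1 v = (0:ℝ))
    (t : ℝ) (htmem : t ∈ Set.Icc t0 t1) :
    (inner ℝ ((t1 - t0)⁻¹ • (U1 - U0))
        ((((t - t0)/(t1 - t0)) • U1 + ((t1 - t)/(t1 - t0)) • U0) - U1) : ℝ)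
      + (1/2) * a (((t - t0)/(t1 - t0)) • U1 + ((t1 - t)/(t1 - t0)) • U0)
                  (((t - t0)/(t1 - t0)) • U1 + ((t1 - t)/(t1 - t0)) • U0)
      - (1/2) * a U1 U1
    ≤ (t1 - t) *
        (-‖(t1 - t0)⁻¹ • (U1 - U0)‖^2
          - ((1/2) * a U1 U1 - (1/2) * a U0 U0) / (t1 - t0)) :=
  stmt_11_general a hsym hpsd t0 t1 ht U0 U1 hscheme t htmem
end

section
/- Let H be a real Hilbert space, 𝔉 a bounded self-adjoint positive semidefinite operator on H, and U⁰, ..., Uᴺ ∈ H satisfy the implicit Euler scheme (Uⁿ - Uⁿ⁻¹)/kₙ + 𝔉(Uⁿ) = 0 with steps kₙ ≤ k_max. Then Σₙ₌₁ᴺ kₙ² ξₙ ≤ (1/4)·k_max²·(‖𝔉(U⁰)‖² - ‖𝔉(Uᴺ)‖²) ≤ (1/4)·k_max²·‖𝔉(U⁰)‖², where ξₙ = (1/2)⟨𝔉(Uⁿ⁻¹) - 𝔉(Uⁿ), 𝔉(Uⁿ)⟩. -/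
/-!
The scheme gives `𝔉 Uⁿ⁻¹ - 𝔉 Uⁿ = kₙ 𝔉(𝔉 Uⁿ)`, so positivity of `𝔉` makes every `ξₙ` nonnegative
and `kₙ² ξₙ ≤ k_max² ξₙ`. The identity `2⟨a - b, b⟩ = ‖a‖² - ‖b‖² - ‖a - b‖²` bounds
`4 ξₙ ≤ ‖𝔉 Uⁿ⁻¹‖² - ‖𝔉 Uⁿ‖²`, and these bounds telescope.
-/

open Finset

theorem Finset.sum_Icc_one_sub_pred_sub {M : Type*} [AddCommGroup M] (g : ℕ → M) (N : ℕ) :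
    ∑ n ∈ Icc 1 N, (g (n - 1) - g n) = g 0 - g N := by
  induction N with
  | zero => simp
  | succ m ih =>
    rw [sum_Icc_succ_top (by omega), ih]
    simp

theorem two_mul_real_inner_sub_le_norm_sq_sub {E : Type*} [NormedAddCommGroup E]
    [InnerProductSpace ℝ E] (a b : E) :
    2 * inner ℝ (a - b) b ≤ ‖a‖ ^ 2 - ‖b‖ ^ 2 := by
  have := norm_sub_sq_real a b
  rw [inner_sub_left, real_inner_self_eq_norm_sq]
  nlinarith [sq_nonneg ‖a - b‖]

theorem sub_eq_smul_of_implicit_euler_step {𝕜 E : Type*} [Field 𝕜] [AddCommGroup E]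
    [Module 𝕜 E] (f : E → E) {k : 𝕜} (hk : k ≠ 0) {u u' : E}
    (hstep : k⁻¹ • (u - u') + f u = 0) :
    u' - u = k • f u := by
  have : u - u' = -(k • f u) := by
    rw [← smul_neg, ← eq_neg_of_add_eq_zero_left hstep, smul_smul, mul_inv_cancel₀ hk, one_smul]
  rw [← neg_sub, this, neg_neg]

section ImplicitEuler

variable {H : Type*} [NormedAddCommGroup H] [InnerProductSpace ℝ H] (F : H →L[ℝ] H)

theorem inner_sub_map_nonneg_of_implicit_euler_step
    (hpsd : ∀ v : H, 0 ≤ inner ℝ (F v) v) {k : ℝ} (hk : 0 < k) {u u' : H}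
    (hstep : k⁻¹ • (u - u') + F u = 0) :
    0 ≤ inner ℝ (F u' - F u) (F u) := by
  rw [← map_sub, sub_eq_smul_of_implicit_euler_step F hk.ne' hstep, map_smul,
    real_inner_smul_left]
  exact mul_nonneg hk.le (hpsd _)

theorem implicit_euler_step_bound
    (hpsd : ∀ v : H, 0 ≤ inner ℝ (F v) v) {k kmax : ℝ} (hk : 0 < k) (hkmax : k ≤ kmax)
    {u u' : H} (hstep : k⁻¹ • (u - u') + F u = 0) :
    k ^ 2 * ((1 / 2) * inner ℝ (F u' - F u) (F u))
      ≤ (1 / 4) * kmax ^ 2 * (‖F u'‖ ^ 2 - ‖F u‖ ^ 2) := by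
  have hξ := inner_sub_map_nonneg_of_implicit_euler_step F hpsd hk hstep
  have hk2 : k ^ 2 ≤ kmax ^ 2 := pow_le_pow_left₀ hk.le hkmax 2
  calc k ^ 2 * ((1 / 2) * inner ℝ (F u' - F u) (F u))
      ≤ kmax ^ 2 * ((1 / 2) * inner ℝ (F u' - F u) (F u)) := by gcongr
    _ ≤ kmax ^ 2 * ((1 / 4) * (‖F u'‖ ^ 2 - ‖F u‖ ^ 2)) := by
      have := two_mul_real_inner_sub_le_norm_sq_sub (F u') (F u)
      exact mul_le_mul_of_nonneg_left (by linarith) (sq_nonneg kmax)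
    _ = (1 / 4) * kmax ^ 2 * (‖F u'‖ ^ 2 - ‖F u‖ ^ 2) := by ring

end ImplicitEuler

theorem stmt_13_general {H : Type*} [NormedAddCommGroup H] [InnerProductSpace ℝ H]
    (F : H →L[ℝ] H)
    (hpsd : ∀ v : H, (0:ℝ) ≤ inner ℝ (F v) v)
    (N : ℕ) (U : ℕ → H) (k : ℕ → ℝ) (kmax : ℝ)
    (hk : ∀ n, 0 < k n) (hkmax : ∀ n, k n ≤ kmax)
    (hscheme : ∀ n, 1 ≤ n → n ≤ N →
      (k n)⁻¹ • (U n - U (n-1)) + F (U n) = 0) :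
    (∑ n ∈ Finset.Icc 1 N,
        (k n)^2 * ((1/2) * inner ℝ (F (U (n-1)) - F (U n)) (F (U n)) : ℝ))
      ≤ (1/4) * kmax^2 * (‖F (U 0)‖^2 - ‖F (U N)‖^2) ∧
    (1/4) * kmax^2 * (‖F (U 0)‖^2 - ‖F (U N)‖^2)
      ≤ (1/4) * kmax^2 * ‖F (U 0)‖^2 := by
  constructor
  · calc _ ≤ ∑ n ∈ Icc 1 N, (1 / 4) * kmax ^ 2 * (‖F (U (n - 1))‖ ^ 2 - ‖F (U n)‖ ^ 2) :=
          sum_le_sum fun n hn ↦ by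
            rw [mem_Icc] at hn
            exact implicit_euler_step_bound F hpsd (hk n) (hkmax n) (hscheme n hn.1 hn.2)
      _ = _ := by
          rw [← mul_sum, sum_Icc_one_sub_pred_sub fun n ↦ ‖F (U n)‖ ^ 2]
  · have : 0 ≤ (1 / 4) * kmax ^ 2 * ‖F (U N)‖ ^ 2 := by positivity
    linarith

theorem stmt_13 {H : Type*} [NormedAddCommGroup H] [InnerProductSpace ℝ H]
    [CompleteSpace H]
    (F : H →L[ℝ] H) (hsa : IsSelfAdjoint F)
    (hpsd : ∀ v : H, (0:ℝ) ≤ inner ℝ (F v) v)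
    (N : ℕ) (U : ℕ → H) (k : ℕ → ℝ) (kmax : ℝ)
    (hk : ∀ n, 0 < k n) (hkmax : ∀ n, k n ≤ kmax)
    (hscheme : ∀ n, 1 ≤ n → n ≤ N →
      (k n)⁻¹ • (U n - U (n-1)) + F (U n) = 0) :
    (∑ n ∈ Finset.Icc 1 N,
        (k n)^2 * ((1/2) * inner ℝ (F (U (n-1)) - F (U n)) (F (U n)) : ℝ))
      ≤ (1/4) * kmax^2 * (‖F (U 0)‖^2 - ‖F (U N)‖^2) ∧
    (1/4) * kmax^2 * (‖F (U 0)‖^2 - ‖F (U N)‖^2)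
      ≤ (1/4) * kmax^2 * ‖F (U 0)‖^2 :=
  stmt_13_general F hpsd N U k kmax hk hkmax hscheme
end

section
/- Let H be a real Hilbert space with a symmetric positive semidefinite bilinear form a, let V_H ⊆ V_h ⊆ H be closed subspaces, and let U_H ∈ V_H and U_h ∈ V_h satisfy ⟨U_H, v⟩ + k·a(U_H, v) = ⟨g, v⟩ for all v ∈ V_H and ⟨U_h, v⟩ + k·a(U_h, v) = ⟨g, v⟩ for all v ∈ V_h, for the same g ∈ H and k > 0. Then for any I_H U_h ∈ V_H: ‖U_H - U_h‖² + k·a(U_H - U_h, U_H - U_h) = ‖U_h - I_H U_h‖² + k·a(U_h - I_H U_h, U_h - I_H U_h) - ‖U_H - I_H U_h‖² - k·a(U_H - I_H U_h, U_H - I_H U_h). -/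
/-!
The energy form `b(x, y) = ⟨x, y⟩ + k a(x, y)` is symmetric, and both discrete solutions are
its Galerkin projections of the same datum, so `U_H - U_h` is `b`-orthogonal to `V_H`. Since
`U_h - I_H U_h = (U_H - I_H U_h) - (U_H - U_h)` with `U_H - I_H U_h ∈ V_H`, the identity is
Pythagoras' theorem for `b`.
-/

namespace LinearMap.BilinForm

variable {R M : Type*} [CommRing R] [AddCommGroup M] [Module R M]

theorem apply_sub_eq_zero_of_galerkin (B : LinearMap.BilinForm R M) {V W : Submodule R M}
    (hVW : V ≤ W) (f : M → R) {u w : M} (hu : ∀ v ∈ V, B u v = f v)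
    (hw : ∀ v ∈ W, B w v = f v) {v : M} (hv : v ∈ V) : B (u - w) v = 0 := by
  rw [map_sub, LinearMap.sub_apply, hu v hv, hw v (hVW hv), sub_self]

theorem apply_sub_sub_eq_add_of_apply_eq_zero (B : LinearMap.BilinForm R M)
    (hB : ∀ x y, B x y = B y x) {x y : M} (hxy : B x y = 0) :
    B (x - y) (x - y) = B x x + B y y := by
  have hyx : B y x = 0 := hB x y ▸ hxy
  simp only [map_sub, LinearMap.sub_apply, hxy, hyx]
  ring

end LinearMap.BilinForm

theorem stmt_15_general {H : Type*} [NormedAddCommGroup H] [InnerProductSpace ℝ H]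
    (a : LinearMap.BilinForm ℝ H)
    (hsym : ∀ x y : H, a x y = a y x)
    (VH Vh : Submodule ℝ H) (hsub : VH ≤ Vh)
    (k : ℝ) (g : H) (UH Uh : H)
    (hUH : UH ∈ VH)
    (heqH : ∀ v ∈ VH, (inner ℝ UH v : ℝ) + k * a UH v = inner ℝ g v)
    (heqh : ∀ v ∈ Vh, (inner ℝ Uh v : ℝ) + k * a Uh v = inner ℝ g v)
    (IHUh : H) (hIH : IHUh ∈ VH) :
    ‖UH - Uh‖^2 + k * a (UH - Uh) (UH - Uh)
      = ‖Uh - IHUh‖^2 + k * a (Uh - IHUh) (Uh - IHUh)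
        - ‖UH - IHUh‖^2 - k * a (UH - IHUh) (UH - IHUh) := by
  set b : LinearMap.BilinForm ℝ H := innerₗ H + k • a
  have hb : ∀ x y, b x y = inner ℝ x y + k * a x y := fun _ _ => rfl
  have hb_self : ∀ x, b x x = ‖x‖ ^ 2 + k * a x x := fun x => by
    rw [hb, real_inner_self_eq_norm_sq]
  have hb_symm : ∀ x y, b x y = b y x := fun x y => by
    rw [hb, hb, real_inner_comm, hsym]
  have horth : b (UH - Uh) (UH - IHUh) = 0 :=
    LinearMap.BilinForm.apply_sub_eq_zero_of_galerkin b hsub (inner ℝ g)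
      (by simpa [hb] using heqH) (by simpa [hb] using heqh) (VH.sub_mem hUH hIH)
  have hpyth :=
    LinearMap.BilinForm.apply_sub_sub_eq_add_of_apply_eq_zero b hb_symm ((hb_symm _ _).trans horth)
  rw [sub_sub_sub_cancel_left, hb_self, hb_self, hb_self] at hpyth
  linarith

theorem stmt_15 {H : Type*} [NormedAddCommGroup H] [InnerProductSpace ℝ H]
    [CompleteSpace H]
    (a : LinearMap.BilinForm ℝ H)
    (hsym : ∀ x y : H, a x y = a y x)
    (hpsd : ∀ v : H, 0 ≤ a v v)
    (VH Vh : Submodule ℝ H) (hVH : IsClosed (VH : Set H))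
    (hVh : IsClosed (Vh : Set H)) (hsub : VH ≤ Vh)
    (k : ℝ) (hk : 0 < k) (g : H) (UH Uh : H)
    (hUH : UH ∈ VH) (hUh : Uh ∈ Vh)
    (heqH : ∀ v ∈ VH, (inner ℝ UH v : ℝ) + k * a UH v = inner ℝ g v)
    (heqh : ∀ v ∈ Vh, (inner ℝ Uh v : ℝ) + k * a Uh v = inner ℝ g v)
    (IHUh : H) (hIH : IHUh ∈ VH) :
    ‖UH - Uh‖^2 + k * a (UH - Uh) (UH - Uh)
      = ‖Uh - IHUh‖^2 + k * a (Uh - IHUh) (Uh - IHUh)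
        - ‖UH - IHUh‖^2 - k * a (UH - IHUh) (UH - IHUh) :=
  stmt_15_general a hsym VH Vh hsub k g UH Uh hUH heqH heqh IHUh hIH
end
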